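/- Let 1 < p ≤ q and 0 ≤ a⁻ ≤ a⁺, and set H⁻(s) = s^p + a⁻·s^q and H⁺(s) = s^p + a⁺·s^q, with shifted N-functions H⁻_σ and H⁺_σ for σ ≥ 0. Then there exists a constant c = c(p,q) > 0 such that for all σ ≥ 0 and s ≥ 0: H⁺_σ(s) ≤ c·( H⁻_σ(s) + (a⁺ − a⁻)·(σ^q + s^q) ). -/

import Mathlib

/-! The integrand of `H_σ` is linear in `H'`, and `H⁺' = H⁻' + (a⁺ - a⁻) · (x ↦ q x^{q-1})`.
As `t / (σ + t) ≤ 1`, the shifted function of `x ↦ q x^{q-1}` is at most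
`∫_σ^{σ+s} q x^{q-1} dx ≤ (σ + s)^q ≤ 2^{q-1} (σ^q + s^q)`; since `H⁻_σ ≥ 0`,
`c = 2^{q-1}` works. -/

open MeasureTheory Real Set

/-- The shifted N-function `H_σ(s) = ∫₀^s H'(σ+t)·t/(σ+t) dt`, expressed through the
derivative `H'`. -/
noncomputable def shifted (H' : ℝ → ℝ) (σ s : ℝ) : ℝ :=
  ∫ t in (0:ℝ)..s, H' (σ + t) * t / (σ + t)

/-- First derivative `H'(s) = p·s^{p−1} + a·q·s^{q−1}` of the double phase function
`H(s) = s^p + a·s^q`. -/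
noncomputable def dpH' (p q a s : ℝ) : ℝ :=
  p * s ^ (p - 1) + a * q * s ^ (q - 1)

theorem Real.rpow_add_le_mul_rpow_add_rpow {a b q : ℝ} (ha : 0 ≤ a) (hb : 0 ≤ b) (hq : 1 ≤ q) :
    (a + b) ^ q ≤ 2 ^ (q - 1) * (a ^ q + b ^ q) := by
  lift a to NNReal using ha
  lift b to NNReal using hb
  exact_mod_cast NNReal.rpow_add_le_mul_rpow_add_rpow a b hq

section Shifted

open intervalIntegral

variable {f g : ℝ → ℝ} {σ s : ℝ}

theorem intervalIntegrable_shifted_integrand (hf : Continuous f) (hσ : 0 ≤ σ) (hs : 0 ≤ s) :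
    IntervalIntegrable (fun t => f (σ + t) * t / (σ + t)) volume 0 s := by
  have hfσ : IntervalIntegrable (fun t => f (σ + t)) volume 0 s :=
    (hf.comp (continuous_const_add σ)).intervalIntegrable 0 s
  rw [intervalIntegrable_iff_integrableOn_Ioc_of_le hs] at hfσ ⊢
  simp only [mul_div_assoc]
  have hw : Measurable fun t => t / (σ + t) := by fun_prop
  refine hfσ.mul_bdd (c := 1) hw.aestronglyMeasurable ?_
  filter_upwards [ae_restrict_mem measurableSet_Ioc] with t ht
  rw [Real.norm_of_nonneg (div_nonneg ht.1.le (by linarith [ht.1]))]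
  exact div_le_one_of_le₀ (by linarith) (by linarith [ht.1])

theorem shifted_add (hf : Continuous f) (hg : Continuous g) (hσ : 0 ≤ σ) (hs : 0 ≤ s) :
    shifted (f + g) σ s = shifted f σ s + shifted g σ s := by
  simp only [shifted, Pi.add_apply, add_mul, add_div]
  exact integral_add (intervalIntegrable_shifted_integrand hf hσ hs)
    (intervalIntegrable_shifted_integrand hg hσ hs)

theorem shifted_const_mul (c : ℝ) : shifted (fun x => c * f x) σ s = c * shifted f σ s := by
  simp only [shifted, mul_assoc, mul_div_assoc]
  exact integral_const_mul c _

theorem shifted_nonneg (hf : ∀ x, 0 ≤ x → 0 ≤ f x) (hσ : 0 ≤ σ) (hs : 0 ≤ s) :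
    0 ≤ shifted f σ s :=
  integral_nonneg hs fun t ht =>
    div_nonneg (mul_nonneg (hf _ (by linarith [ht.1])) ht.1) (by linarith [ht.1])

theorem shifted_le_integral (hf : Continuous f) (hf₀ : ∀ x, 0 ≤ x → 0 ≤ f x) (hσ : 0 ≤ σ)
    (hs : 0 ≤ s) : shifted f σ s ≤ ∫ x in σ..σ + s, f x := by
  calc shifted f σ s ≤ ∫ t in 0..s, f (σ + t) := by
        refine integral_mono_on hs (intervalIntegrable_shifted_integrand hf hσ hs)
          ((hf.comp (continuous_const_add σ)).intervalIntegrable 0 s) fun t ht => ?_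
        rw [mul_div_assoc]
        exact mul_le_of_le_one_right (hf₀ _ (by linarith [ht.1]))
          (div_le_one_of_le₀ (by linarith) (by linarith [ht.1]))
    _ = ∫ x in σ..σ + s, f x := by simp [integral_comp_add_left]

theorem shifted_rpow_deriv_le {q : ℝ} (hq : 1 ≤ q) (hσ : 0 ≤ σ) (hs : 0 ≤ s) :
    shifted (fun x => q * x ^ (q - 1)) σ s ≤ 2 ^ (q - 1) * (σ ^ q + s ^ q) :=
  calc shifted (fun x => q * x ^ (q - 1)) σ s ≤ ∫ x in σ..σ + s, q * x ^ (q - 1) :=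
        shifted_le_integral (continuous_const.mul (continuous_rpow_const (by linarith)))
          (fun x hx => by positivity) hσ hs
    _ = (σ + s) ^ q - σ ^ q := by
        rw [intervalIntegral.integral_const_mul, integral_rpow (Or.inl (by linarith)),
          sub_add_cancel]
        field_simp
    _ ≤ (σ + s) ^ q := sub_le_self _ (by positivity)
    _ ≤ 2 ^ (q - 1) * (σ ^ q + s ^ q) := Real.rpow_add_le_mul_rpow_add_rpow hσ hs hq

end Shifted

section DoublePhase

variable {p q : ℝ}

theorem continuous_dpH' (hp : 1 ≤ p) (hq : 1 ≤ q) (a : ℝ) : Continuous (dpH' p q a) := by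
  unfold dpH'
  have := continuous_rpow_const (q := p - 1) (by linarith)
  have := continuous_rpow_const (q := q - 1) (by linarith)
  fun_prop

theorem dpH'_nonneg (hp : 0 ≤ p) (hq : 0 ≤ q) {a x : ℝ} (ha : 0 ≤ a) (hx : 0 ≤ x) :
    0 ≤ dpH' p q a x := by
  unfold dpH'
  positivity

theorem dpH'_eq_add (a b : ℝ) :
    dpH' p q b = dpH' p q a + fun x => (b - a) * (q * x ^ (q - 1)) := by
  ext x
  simp only [dpH', Pi.add_apply]
  ring

theorem shifted_dpH'_le (hp : 1 ≤ p) (hq : 1 ≤ q) {a b σ s : ℝ} (hab : a ≤ b) (hσ : 0 ≤ σ)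
    (hs : 0 ≤ s) :
    shifted (dpH' p q b) σ s ≤
      shifted (dpH' p q a) σ s + (b - a) * (2 ^ (q - 1) * (σ ^ q + s ^ q)) := by
  rw [dpH'_eq_add a b, shifted_add (g := fun x => (b - a) * (q * x ^ (q - 1)))
    (continuous_dpH' hp hq a)
    (continuous_const.mul (continuous_const.mul (continuous_rpow_const (by linarith)))) hσ hs,
    shifted_const_mul]
  gcongr
  exact shifted_rpow_deriv_le hq hσ hs

end DoublePhase

/-- **Comparison of shifted double phase functions with different coefficients.**
For `1 < p ≤ q` and `0 ≤ a⁻ ≤ a⁺`, with `H^±(s) = s^p + a^±·s^q`, there is `c = c(p,q)`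
such that `H⁺_σ(s) ≤ c(H⁻_σ(s) + (a⁺−a⁻)(σ^q + s^q))` for all `σ, s ≥ 0`. -/
theorem shifted_double_phase_comparison (p q : ℝ) (hp : 1 < p) (hpq : p ≤ q) :
    ∃ c : ℝ, 0 < c ∧ ∀ aminus aplus : ℝ, 0 ≤ aminus → aminus ≤ aplus →
      ∀ σ s : ℝ, 0 ≤ σ → 0 ≤ s →
        shifted (dpH' p q aplus) σ s ≤
          c * (shifted (dpH' p q aminus) σ s + (aplus - aminus) * (σ ^ q + s ^ q)) := by
  have hq : 1 ≤ q := hp.le.trans hpq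
  refine ⟨2 ^ (q - 1), by positivity, fun aminus aplus hminus hle σ s hσ hs => ?_⟩
  have hc : 1 ≤ (2 : ℝ) ^ (q - 1) := one_le_rpow (by norm_num) (by linarith)
  have hS : 0 ≤ shifted (dpH' p q aminus) σ s :=
    shifted_nonneg (fun x hx => dpH'_nonneg (by linarith) (by linarith) hminus hx) hσ hs
  calc shifted (dpH' p q aplus) σ s
      ≤ shifted (dpH' p q aminus) σ s + (aplus - aminus) * (2 ^ (q - 1) * (σ ^ q + s ^ q)) :=
        shifted_dpH'_le hp.le hq hle hσ hs
    _ ≤ 2 ^ (q - 1) * (shifted (dpH' p q aminus) σ s + (aplus - aminus) * (σ ^ q + s ^ q)) := by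
        nlinarith [mul_le_mul_of_nonneg_right hc hS]
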